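/- arXiv:2508.12360 — 8 statements merged into one kernel-verified Lean document; each statement's English description precedes it below -/
import Mathlib

section
/- Let F : ℝ → ℂ be differentiable, 2π-periodic, even (F(-k) = F(k) for all k), and nonvanishing (F(k) ≠ 0 for all k). Then the winding integral of F around the Brillouin zone vanishes: ∫_0^{2π} (deriv F k) / (F k) dk = 0. -/
/-!
The integrand is the logarithmic derivative `F' / F`. It inherits the period `2π` from `F`, and it
is odd because differentiation turns even functions into odd ones. An odd periodic function
integrates to zero over a period: centre the period at the origin and reflect.
-/

open intervalIntegral

namespace Function

section Deriv

variable {𝕜 F : Type*} [NontriviallyNormedField 𝕜] [NormedAddCommGroup F] [NormedSpace 𝕜 F]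
  {f : 𝕜 → F}

theorem Periodic.deriv {c : 𝕜} (hf : Periodic f c) : Periodic (deriv f) c := fun x => by
  rw [← deriv_comp_add_const, funext hf]

theorem Even.deriv (hf : f.Even) : (_root_.deriv f).Odd := fun x =>
  calc _root_.deriv f (-x) = -_root_.deriv (fun y => f (-y)) x := by rw [deriv_comp_neg, neg_neg]
    _ = -_root_.deriv f x := by rw [funext hf]

end Deriv

section LogDeriv

variable {𝕜 𝕜' : Type*} [NontriviallyNormedField 𝕜] [NontriviallyNormedField 𝕜']
  [NormedAlgebra 𝕜 𝕜'] {f : 𝕜 → 𝕜'}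

theorem Periodic.logDeriv {c : 𝕜} (hf : Periodic f c) : Periodic (logDeriv f) c :=
  hf.deriv.div hf

theorem Even.logDeriv (hf : f.Even) : (_root_.logDeriv f).Odd := fun x => by
  rw [logDeriv_apply, logDeriv_apply, hf.deriv.eq, hf.eq, neg_div]

end LogDeriv

section Integral

variable {E : Type*} [NormedAddCommGroup E] [NormedSpace ℝ E] {f : ℝ → E}

theorem Odd.intervalIntegral_neg_eq_zero (hf : f.Odd) (a : ℝ) : ∫ x in -a..a, f x = 0 := by
  -- Reflecting shows the integral is its own negative; no integrability is needed.
  have := IsAddTorsionFree.of_isTorsionFree ℝ E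
  refine self_eq_neg.mp ?_
  calc ∫ x in -a..a, f x = ∫ x in -a..a, f (-x) := by rw [integral_comp_neg, neg_neg]
    _ = -∫ x in -a..a, f x := by simp_rw [hf.eq, integral_neg]

theorem Periodic.intervalIntegral_eq_zero_of_odd {T : ℝ} (hf : Periodic f T) (hodd : f.Odd) :
    ∫ x in (0 : ℝ)..T, f x = 0 := by
  have hcentre := hf.intervalIntegral_add_eq 0 (-(T / 2))
  rw [zero_add, neg_add_eq_sub, sub_half] at hcentre
  rw [hcentre]
  exact hodd.intervalIntegral_neg_eq_zero _

end Integral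

end Function

theorem winding_integral_eq_zero_of_even_general
    (F : ℝ → ℂ)
    (hper : ∀ k : ℝ, F (k + 2 * Real.pi) = F k)
    (heven : ∀ k : ℝ, F (-k) = F k) :
    ∫ k in (0 : ℝ)..(2 * Real.pi), deriv F k / F k = 0 :=
  (Function.Periodic.logDeriv hper).intervalIntegral_eq_zero_of_odd
    (Function.Even.logDeriv heven)

/-- The winding integral of a differentiable, `2π`-periodic, even, nonvanishing
function `F : ℝ → ℂ` around the Brillouin zone vanishes. -/
theorem winding_integral_eq_zero_of_even
    (F : ℝ → ℂ)
    (hdiff : Differentiable ℝ F)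
    (hper : ∀ k : ℝ, F (k + 2 * Real.pi) = F k)
    (heven : ∀ k : ℝ, F (-k) = F k)
    (hnz : ∀ k : ℝ, F k ≠ 0) :
    ∫ k in (0 : ℝ)..(2 * Real.pi), deriv F k / F k = 0 :=
  winding_integral_eq_zero_of_even_general F hper heven
end

section
/- Let P be a polynomial over ℂ with natural degree 2α that is palindromic, i.e. P.coeff i = P.coeff (2α − i) for every i ≤ 2α. Then, in the multiset of roots of P counted with multiplicity, the number of roots z with |z| < 1 equals the number of roots z with |z| > 1; consequently 2·(number of roots with |z| < 1) + (number of roots with |z| = 1) = 2α. -/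
/-!
A palindromic polynomial equals its reverse, and the reverse of `P` has the inverses of the
roots of `P` as roots, with the same multiplicities. So inversion permutes the roots of `P`
with multiplicity; as `0` is not a root, it exchanges those inside and outside the unit circle.
-/

open Polynomial

namespace Polynomial

theorem reverse_eq_self_of_coeff_natDegree_sub {R : Type*} [Semiring R] {p : R[X]}
    (h : ∀ i ≤ p.natDegree, p.coeff i = p.coeff (p.natDegree - i)) : p.reverse = p := by
  ext i
  rw [coeff_reverse]
  rcases le_or_gt i p.natDegree with hi | hi
  · rw [revAt_le hi, h i hi]
  · rw [revAt_eq_self_of_lt hi]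

theorem reverse_pow {R : Type*} [Semiring R] [NoZeroDivisors R] (p : R[X]) (n : ℕ) :
    (p ^ n).reverse = p.reverse ^ n := by
  induction n with
  | zero => rw [pow_zero, pow_zero, ← C_1, reverse_C]
  | succ n ih => rw [pow_succ, reverse_mul_of_domain, ih, pow_succ]

theorem zero_notMem_roots_of_reverse_eq_self {R : Type*} [CommRing R] [IsDomain R] {p : R[X]}
    (hp : p.reverse = p) : (0 : R) ∉ p.roots := by
  rcases eq_or_ne p 0 with rfl | h0
  · simp
  rw [mem_roots h0, IsRoot, ← coeff_zero_eq_eval_zero, ← hp, coeff_zero_reverse]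
  exact leadingCoeff_ne_zero.mpr h0

section Field

variable {K : Type*} [Field K]

theorem reverse_X_sub_C {z : K} (hz : z ≠ 0) : (X - C z).reverse = C (-z) * (X - C z⁻¹) := by
  have hX : (X : K[X]).reverse = 1 := by
    rw [← one_mul X, reverse_mul_X, ← C_1, reverse_C]
  rw [sub_eq_add_neg, ← C_neg, reverse_add_C, natDegree_X, hX, mul_sub, ← C_mul,
    neg_mul, mul_inv_cancel₀ hz]
  simp only [pow_one, C_neg, C_1]
  ring

theorem pow_X_sub_C_inv_dvd_reverse {p : K[X]} {z : K} (hz : z ≠ 0) {m : ℕ}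
    (h : (X - C z) ^ m ∣ p) : (X - C z⁻¹) ^ m ∣ p.reverse := by
  obtain ⟨q, rfl⟩ := h
  rw [reverse_mul_of_domain, reverse_pow, reverse_X_sub_C hz, mul_pow]
  exact (dvd_mul_left _ _).mul_right _

theorem rootMultiplicity_le_rootMultiplicity_inv_reverse (p : K[X]) {z : K} (hz : z ≠ 0) :
    p.rootMultiplicity z ≤ p.reverse.rootMultiplicity z⁻¹ := by
  rcases eq_or_ne p 0 with rfl | h0
  · simp
  rw [le_rootMultiplicity_iff (reverse_eq_zero.not.mpr h0)]
  exact pow_X_sub_C_inv_dvd_reverse hz (pow_rootMultiplicity_dvd p z)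

theorem rootMultiplicity_inv_of_reverse_eq_self {p : K[X]} (hp : p.reverse = p) (z : K) :
    p.rootMultiplicity z⁻¹ = p.rootMultiplicity z := by
  rcases eq_or_ne z 0 with rfl | hz
  · rw [inv_zero]
  have hle := rootMultiplicity_le_rootMultiplicity_inv_reverse p hz
  have hge := rootMultiplicity_le_rootMultiplicity_inv_reverse p (inv_ne_zero hz)
  rw [hp] at hle hge
  rw [inv_inv] at hge
  exact le_antisymm hge hle

theorem roots_map_inv_of_reverse_eq_self {p : K[X]} (hp : p.reverse = p) :
    p.roots.map (·⁻¹) = p.roots := by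
  classical
  ext z
  conv_lhs => rw [← inv_inv z]
  rw [Multiset.count_map_eq_count' _ _ inv_injective, count_roots, count_roots,
    rootMultiplicity_inv_of_reverse_eq_self hp]

end Field

end Polynomial

namespace Multiset

theorem card_filter_lt_add_card_filter_eq_add_card_filter_gt {α β : Type*} [LinearOrder β]
    (s : Multiset α) (f : α → β) (b : β) :
    (s.filter (f · < b)).card + (s.filter (f · = b)).card + (s.filter (b < f ·)).card
      = s.card := by
  induction s using Multiset.induction_on with
  | empty => simp
  | cons a s ih =>
    simp only [filter_cons, card_add, card_cons]
    rcases lt_trichotomy (f a) b with h | rfl | h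
    · simp [h, h.ne, h.not_gt]
      omega
    · simp
      omega
    · simp [h, h.ne', h.not_gt]
      omega

theorem card_filter_norm_lt_one_eq_of_map_inv {E : Type*} [NormedDivisionRing E]
    {s : Multiset E} (h0 : (0 : E) ∉ s) (hs : s.map (·⁻¹) = s) :
    (s.filter (‖·‖ < 1)).card = (s.filter (1 < ‖·‖)).card := by
  conv_rhs => rw [← hs, filter_map, card_map]
  refine congrArg card (filter_congr fun z hz => ?_)
  have hz : 0 < ‖z‖ := norm_pos_iff.mpr (ne_of_mem_of_not_mem hz h0)
  simp only [Function.comp_apply, norm_inv, one_lt_inv₀ hz]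

end Multiset

/-- The roots (with multiplicity) of a palindromic polynomial of degree `2α` over `ℂ`
split evenly between the inside and the outside of the unit circle. -/
theorem palindromic_roots_split
    (α : ℕ) (P : Polynomial ℂ)
    (hdeg : P.natDegree = 2 * α)
    (hpal : ∀ i ≤ 2 * α, P.coeff i = P.coeff (2 * α - i)) :
    (P.roots.filter (fun z => ‖z‖ < 1)).card
      = (P.roots.filter (fun z => 1 < ‖z‖)).card ∧
    2 * (P.roots.filter (fun z => ‖z‖ < 1)).card
      + (P.roots.filter (fun z => ‖z‖ = 1)).card = 2 * α := by
  have hrev : P.reverse = P := reverse_eq_self_of_coeff_natDegree_sub (hdeg ▸ hpal)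
  have hsplit : (P.roots.filter (fun z => ‖z‖ < 1)).card
      = (P.roots.filter (fun z => 1 < ‖z‖)).card :=
    Multiset.card_filter_norm_lt_one_eq_of_map_inv (zero_notMem_roots_of_reverse_eq_self hrev)
      (roots_map_inv_of_reverse_eq_self hrev)
  have htotal := P.roots.card_filter_lt_add_card_filter_eq_add_card_filter_gt (‖·‖) 1
  rw [IsAlgClosed.card_roots_eq_natDegree, hdeg] at htotal
  exact ⟨hsplit, by omega⟩
end

section
/- Let α ≥ 1 and let P be a polynomial over ℂ with natural degree 2α that is palindromic, i.e. P.coeff i = P.coeff (2α − i) for every i ≤ 2α, and suppose P has no root on the unit circle (P(z) ≠ 0 whenever |z| = 1). Then the contour integral over the unit circle ∮_{|z|=1} [ (deriv (fun z => P.eval z) z) / (P.eval z) − α / z ] dz = 0. -/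
/-!
Palindromy says `P z = z ^ (2α) * P z⁻¹`, so `f z = P z / z ^ α` is invariant under `z ↦ z⁻¹`
and the integrand `h = f' / f` satisfies `z⁻¹ * h z⁻¹ = -(z * h z)`. On the unit circle
`z ↦ z⁻¹` is `θ ↦ -θ`, so after parametrisation the integrand is an odd `2π`-periodic function
of `θ`, whose integral over a period vanishes. No root counting is needed.
-/

open Polynomial Real

namespace Polynomial

theorem reflect_eq_self_of_coeff_eq_coeff_sub {R : Type*} [Semiring R] {P : R[X]} {N : ℕ}
    (hpal : ∀ i ≤ N, P.coeff i = P.coeff (N - i)) : P.reflect N = P := by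
  ext i
  rw [coeff_reflect]
  rcases le_or_gt i N with hi | hi
  · rw [revAt_le hi, ← hpal i hi]
  · rw [revAt_eq_self_of_lt hi]

theorem eval_eq_pow_mul_eval_inv_of_reflect_eq_self {K : Type*} [Field K] {P : K[X]} {N : ℕ}
    (hP : P.reflect N = P) (hdeg : P.natDegree ≤ N) {x : K} (hx : x ≠ 0) :
    P.eval x = x ^ N * P.eval x⁻¹ := by
  have := invertibleOfNonzero hx
  have h := eval₂_reflect_mul_pow (RingHom.id K) x N P hdeg
  rw [hP, invOf_eq_inv] at h
  rw [eval, ← h, mul_comm]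
  rfl

theorem mul_logDeriv_add_inv_mul_logDeriv_inv_of_reflect_eq_self {𝕜 : Type*}
    [NontriviallyNormedField 𝕜] {P : 𝕜[X]} {N : ℕ}
    (hP : P.reflect N = P) (hdeg : P.natDegree ≤ N) {z : 𝕜} (hz : z ≠ 0) (hPz : P.eval z ≠ 0) :
    z * logDeriv (fun w => P.eval w) z + z⁻¹ * logDeriv (fun w => P.eval w) z⁻¹ = N := by
  have hsym : (fun w => P.eval w) =ᶠ[nhds z] fun w => w ^ N * P.eval w⁻¹ := by
    filter_upwards [isOpen_ne.mem_nhds hz] with w hw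
    exact eval_eq_pow_mul_eval_inv_of_reflect_eq_self hP hdeg hw
  have hPz' : P.eval z⁻¹ ≠ 0 := by
    intro h
    rw [eval_eq_pow_mul_eval_inv_of_reflect_eq_self hP hdeg hz, h, mul_zero] at hPz
    exact hPz rfl
  have hlog : logDeriv (fun w => P.eval w) z
      = N / z - logDeriv (fun w => P.eval w) z⁻¹ / z ^ 2 := by
    rw [logDeriv_apply, hsym.deriv_eq, hsym.eq_of_nhds, ← logDeriv_apply,
      logDeriv_mul (f := fun w => w ^ N) (g := fun w => P.eval w⁻¹) z (pow_ne_zero _ hz) hPz'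
        (by fun_prop) ((Polynomial.differentiableAt _).comp z (differentiableAt_inv hz)),
      logDeriv_pow, ← Function.comp_def (fun w => P.eval w) (·⁻¹),
      logDeriv_comp (Polynomial.differentiableAt _) (differentiableAt_inv hz), deriv_inv]
    ring
  rw [hlog]
  field_simp
  ring

end Polynomial

theorem intervalIntegral.integral_neg_self_eq_zero_of_odd {E : Type*} [NormedAddCommGroup E]
    [NormedSpace ℝ E] {f : ℝ → E} (hodd : ∀ x, f (-x) = -f x) (a : ℝ) :
    ∫ x in -a..a, f x = 0 := by
  have h := intervalIntegral.integral_comp_neg (a := -a) (b := a) f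
  simp only [hodd, intervalIntegral.integral_neg, neg_neg] at h
  have := IsAddTorsionFree.of_isTorsionFree ℝ E
  exact self_eq_neg.mp h.symm

theorem circleIntegral_eq_zero_of_inv_mul_eq_neg {f : ℂ → ℂ}
    (hf : ∀ z ∈ Metric.sphere (0 : ℂ) 1, z⁻¹ * f z⁻¹ = -(z * f z)) :
    (∮ z in C(0, 1), f z) = 0 := by
  set F : ℝ → ℂ := fun θ => deriv (circleMap 0 1) θ • f (circleMap 0 1 θ)
  have hper : Function.Periodic F (2 * π) := fun θ => by
    simp only [F, deriv_circleMap, periodic_circleMap 0 1 θ]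
  have hodd : ∀ θ, F (-θ) = -F θ := fun θ => by
    have hinv : circleMap 0 1 (-θ) = (circleMap 0 1 θ)⁻¹ := by
      rw [circleMap_zero_inv, inv_one]
    have h := hf _ (circleMap_mem_sphere 0 zero_le_one θ)
    simp only [F, deriv_circleMap, smul_eq_mul, hinv]
    linear_combination Complex.I * h
  calc (∮ z in C(0, 1), f z) = ∫ θ in 0..0 + 2 * π, F θ := by rw [zero_add]; rfl
    _ = ∫ θ in -π..-π + 2 * π, F θ := hper.intervalIntegral_add_eq 0 (-π)
    _ = 0 := by
      rw [show -π + 2 * π = π by ring]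
      exact intervalIntegral.integral_neg_self_eq_zero_of_odd hodd π

theorem palindromic_log_deriv_circleIntegral_eq_zero_general
    (α : ℕ) (P : Polynomial ℂ)
    (hdeg : P.natDegree = 2 * α)
    (hpal : ∀ i ≤ 2 * α, P.coeff i = P.coeff (2 * α - i))
    (hroot : ∀ z : ℂ, ‖z‖ = 1 → P.eval z ≠ 0) :
    (∮ z in C(0, 1),
      (deriv (fun w => P.eval w) z) / P.eval z - (α : ℂ) / z) = 0 := by
  have hrefl : P.reflect (2 * α) = P := reflect_eq_self_of_coeff_eq_coeff_sub hpal
  refine circleIntegral_eq_zero_of_inv_mul_eq_neg fun z hz => ?_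
  have hz0 : z ≠ 0 := ne_zero_of_mem_sphere one_ne_zero ⟨z, hz⟩
  have hsum := mul_logDeriv_add_inv_mul_logDeriv_inv_of_reflect_eq_self hrefl hdeg.le hz0
    (hroot z (mem_sphere_zero_iff_norm.mp hz))
  rw [← logDeriv_apply, ← logDeriv_apply, div_inv_eq_mul]
  push_cast at hsum
  linear_combination hsum - 2 * α * mul_inv_cancel₀ hz0

/-- Lemma 2 of the paper (case without zeros on the contour): the winding integral of
the logarithmic derivative of `P(z)/z^α` over the unit circle vanishes for a
palindromic polynomial `P` of degree `2α` with no root on the unit circle. -/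
theorem palindromic_log_deriv_circleIntegral_eq_zero
    (α : ℕ) (hα : 1 ≤ α) (P : Polynomial ℂ)
    (hdeg : P.natDegree = 2 * α)
    (hpal : ∀ i ≤ 2 * α, P.coeff i = P.coeff (2 * α - i))
    (hroot : ∀ z : ℂ, ‖z‖ = 1 → P.eval z ≠ 0) :
    (∮ z in C(0, 1),
      (deriv (fun w => P.eval w) z) / P.eval z - (α : ℂ) / z) = 0 :=
  palindromic_log_deriv_circleIntegral_eq_zero_general α P hdeg hpal hroot
end

section
/- Let a0, a1, a2, a3 : ℝ → ℂ and define H(k) = a0(k)·σ0 + a1(k)·σx + a2(k)·σy + a3(k)·σz as a family of 2×2 complex matrices. Suppose a0 is even (a0(−k) = a0(k) for all k) and k ↦ det(H(k)) is even (det H(−k) = det H(k) for all k). Then for every E0 ∈ ℂ and every k ∈ ℝ: det(H(k) − E0·σ0) = det(H(−k) − E0·σ0), i.e. the characteristic polynomial F(k) = det[H(k) − E0·I] is an even function of k for every reference energy E0. -/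
noncomputable section

/-- The 2×2 identity matrix. -/
def σ0 : Matrix (Fin 2) (Fin 2) ℂ := !![1, 0; 0, 1]

/-- The Pauli matrix `σx`. -/
def σx : Matrix (Fin 2) (Fin 2) ℂ := !![0, 1; 1, 0]

/-- The Pauli matrix `σy`. -/
def σy : Matrix (Fin 2) (Fin 2) ℂ := !![0, -Complex.I; Complex.I, 0]

/-- The Pauli matrix `σz`. -/
def σz : Matrix (Fin 2) (Fin 2) ℂ := !![1, 0; 0, -1]

lemma det_shift (b0 b1 b2 b3 E0 : ℂ) :
    (b0 • σ0 + b1 • σx + b2 • σy + b3 • σz - E0 • σ0).det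
      = (b0 • σ0 + b1 • σx + b2 • σy + b3 • σz).det - 2 * E0 * b0 + E0 ^ 2 := by
  simp [σ0, σx, σy, σz, Matrix.det_fin_two, Matrix.smul_apply,
    Matrix.add_apply, Matrix.sub_apply]
  ring

/-- Corollary 1 of the paper: if `a₀` and `det H` are even functions of `k`, then the
characteristic polynomial `det[H(k) − E₀·I]` is even in `k` for every `E₀`. -/
theorem charpoly_even_of_a0_det_even
    (a0 a1 a2 a3 : ℝ → ℂ)
    (H : ℝ → Matrix (Fin 2) (Fin 2) ℂ)
    (hH : ∀ k : ℝ, H k = a0 k • σ0 + a1 k • σx + a2 k • σy + a3 k • σz)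
    (ha0 : ∀ k : ℝ, a0 (-k) = a0 k)
    (hdet : ∀ k : ℝ, (H (-k)).det = (H k).det) :
    ∀ (E0 : ℂ) (k : ℝ), (H k - E0 • σ0).det = (H (-k) - E0 • σ0).det := by
  intro E0 k
  have h1 := det_shift (a0 k) (a1 k) (a2 k) (a3 k) E0
  have h2 := det_shift (a0 (-k)) (a1 (-k)) (a2 (-k)) (a3 (-k)) E0
  rw [← hH k] at h1
  rw [← hH (-k)] at h2
  rw [h1, h2, hdet, ha0]

end
end

section
/- Let x, y, ξ, a, b, γ ∈ ℝ with a > 0, b > 0, γ ≥ 0 and x > 0. If x² − y² = ξ² + (a² − b²)·γ and x·y = a·b·γ, then a·y ≤ b·x (equivalently y/x ≤ b/a). -/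
/-- The core inequality of Appendix D: if `x² − y² = ξ² + (a² − b²)γ` and `xy = abγ`
with `a, b > 0`, `γ ≥ 0`, `x > 0`, then `y/x ≤ b/a`, i.e. `a y ≤ b x`. -/
theorem ratio_bound_of_curve_eqs
    (x y ξ a b γ : ℝ) (ha : 0 < a) (hb : 0 < b) (hγ : 0 ≤ γ) (hx : 0 < x)
    (h1 : x ^ 2 - y ^ 2 = ξ ^ 2 + (a ^ 2 - b ^ 2) * γ)
    (h2 : x * y = a * b * γ) :
    a * y ≤ b * x := by
  rcases le_or_gt y 0 with hy | hy
  · nlinarith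
  · have key : (b * x - a * y) * (a * x + b * y) = a * b * ξ ^ 2 := by
      linear_combination a * b * h1 + (b ^ 2 - a ^ 2) * h2
    have hpos : 0 < a * x + b * y := by positivity
    have h3 : 0 ≤ (b * x - a * y) * (a * x + b * y) := key ▸ by positivity
    nlinarith [(mul_nonneg_iff_of_pos_right hpos).mp h3]
end

section
/- Let t, μ, k_x, k_y ∈ ℝ and a, b ∈ ℝ with a > 0, b > 0. Set ξ = −2t(cos k_x + cos k_y) − μ and let E ∈ ℂ satisfy E² = (ξ : ℂ)² + (a + b·i)²·(sin²k_x + sin²k_y) and Re E > 0. Then a·(Im E) ≤ b·(Re E), i.e. Im E / Re E ≤ Im Δ / Re Δ where Δ = a + ib. -/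
set_option maxHeartbeats 1000000 in
/-- Every PBC quasiparticle energy of the non-Hermitian chiral `p`-wave superfluid
satisfies `Im E / Re E ≤ Im Δ / Re Δ`. -/
theorem im_re_ratio_bound
    (t μ kx ky a b : ℝ) (ha : 0 < a) (hb : 0 < b) (E : ℂ)
    (hE : E ^ 2 = ((-2 * t * (Real.cos kx + Real.cos ky) - μ : ℝ) : ℂ) ^ 2
      + (a + b * Complex.I) ^ 2 * ((Real.sin kx ^ 2 + Real.sin ky ^ 2 : ℝ) : ℂ))
    (hRe : 0 < E.re) :
    a * E.im ≤ b * E.re := by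
  set ξ : ℝ := -2 * t * (Real.cos kx + Real.cos ky) - μ with hξ
  set s : ℝ := Real.sin kx ^ 2 + Real.sin ky ^ 2 with hs
  have hsnn : 0 ≤ s := by positivity
  rw [Complex.ext_iff] at hE
  obtain ⟨hre, him⟩ := hE
  simp only [pow_two, Complex.mul_re, Complex.mul_im, Complex.add_re, Complex.add_im,
    Complex.ofReal_re, Complex.ofReal_im, Complex.I_re, Complex.I_im] at hre him
  set x := E.re
  set y := E.im
  have h1 : x * x - y * y = ξ * ξ + (a * a - b * b) * s := by nlinarith [hre]
  have h2 : x * y = a * b * s := by nlinarith [him]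
  clear hre him
  by_contra h
  push_neg at h
  have hy : 0 < y := by nlinarith
  have hspos : 0 < s := by nlinarith [mul_pos hRe hy, mul_pos ha hb]
  have hX : x * x < a * a * s := by
    nlinarith [mul_pos hRe (sub_pos.2 h)]
  have hxy2 : (x * y) * (x * y) = (a * b * s) * (a * b * s) := by rw [h2]
  have hbs : a * a * (b * b) * (s * s) < a * a * s * (y * y) := by
    nlinarith [mul_pos (sub_pos.2 hX) (mul_pos hy hy), hxy2]
  nlinarith [hbs, mul_pos (mul_pos ha ha) hspos, sq_nonneg ξ, hX]
end

section
/- Let ξ, a, b, g ∈ ℝ with g ≥ 0, and let E ∈ ℂ satisfy E² = (ξ : ℂ)² + (a + b·i)²·g. Then (Re E)·(Im E) = a·b·g. Moreover, if a ≠ 0 and b ≠ 0, then Im E = 0 if and only if g = 0. -/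
/-- Robustness of gap nodes: for `E² = ξ² + Δ²g` with `Δ = a + ib`, one has
`Re E · Im E = a b g`, and if `a ≠ 0` and `b ≠ 0`, then `Im E = 0 ↔ g = 0`. -/
theorem node_robustness
    (ξ a b g : ℝ) (hg : 0 ≤ g) (E : ℂ)
    (hE : E ^ 2 = (ξ : ℂ) ^ 2 + (a + b * Complex.I) ^ 2 * (g : ℂ)) :
    E.re * E.im = a * b * g ∧ (a ≠ 0 → b ≠ 0 → (E.im = 0 ↔ g = 0)) := by
  have him : (E ^ 2).im = 2 * (a * b * g) := by
    rw [hE]; simp [Complex.add_im, Complex.mul_im, pow_two]; ring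
  have hre : (E ^ 2).re = ξ ^ 2 + (a ^ 2 - b ^ 2) * g := by
    rw [hE]; simp [Complex.add_re, Complex.mul_re, pow_two]; try ring
  have him' : 2 * (E.re * E.im) = 2 * (a * b * g) := by
    rw [← him]; simp [pow_two, Complex.mul_im]; ring
  have key : E.re * E.im = a * b * g := by linarith
  refine ⟨key, fun ha hb => ⟨fun h0 => ?_, fun h0 => ?_⟩⟩
  · -- Im E = 0 ⟹ g = 0
    have : a * b * g = 0 := by rw [← key, h0, mul_zero]
    rcases mul_eq_zero.mp this with h | h
    · exact (mul_ne_zero ha hb h).elim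
    · exact h
  · -- g = 0 ⟹ Im E = 0
    have hre' : E.re ^ 2 - E.im ^ 2 = ξ ^ 2 := by
      have : (E ^ 2).re = E.re ^ 2 - E.im ^ 2 := by
        simp [pow_two, Complex.mul_re]
      rw [this] at hre; rw [hre, h0]; ring
    have hprod : E.re * E.im = 0 := by rw [key, h0, mul_zero]
    rcases mul_eq_zero.mp hprod with h | h
    · -- Re E = 0 ⟹ -Im² = ξ² ⟹ Im = 0
      nlinarith [sq_nonneg E.im, sq_nonneg ξ]
    · exact h
end

section
/- Let n ∈ ℕ, let H : Matrix (Fin n) (Fin n) ℂ, and let U be an invertible n×n complex matrix such that U · (H.map (starRingEnd ℂ)) · U⁻¹ = −H (parity-particle-hole symmetry). If λ ∈ ℂ is an eigenvalue of H (i.e. det(H − λ·1) = 0), then −conj(λ) is also an eigenvalue of H. -/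
/-- CP symmetry `U H* U⁻¹ = −H` forces the eigenvalues of a non-Hermitian
Hamiltonian to appear in anti-complex-conjugate pairs `(λ, −λ*)`. -/
theorem cp_symmetry_eigenvalue_pair
    (n : ℕ) (H U : Matrix (Fin n) (Fin n) ℂ) (hU : IsUnit U)
    (hsym : U * (H.map (starRingEnd ℂ)) * U⁻¹ = -H)
    (lam : ℂ) (hlam : (H - lam • 1).det = 0) :
    (H - (-(starRingEnd ℂ lam)) • 1).det = 0 := by
  have hUU : U * U⁻¹ = 1 :=
    Matrix.mul_nonsing_inv U ((Matrix.isUnit_iff_isUnit_det U).mp hU)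
  have hmap : (H - lam • 1).map (starRingEnd ℂ)
      = H.map (starRingEnd ℂ) - (starRingEnd ℂ lam) • 1 := by
    ext i j
    simp [Matrix.map_apply, Matrix.sub_apply, Matrix.smul_apply, Matrix.one_apply,
      apply_ite (starRingEnd ℂ)]
  have hdet1 : (H.map (starRingEnd ℂ) - (starRingEnd ℂ lam) • 1).det = 0 := by
    rw [← hmap, ← RingHom.mapMatrix_apply, ← RingHom.map_det, hlam, map_zero]
  have hkey : H - (-(starRingEnd ℂ lam)) • 1
      = U * (-(H.map (starRingEnd ℂ) - (starRingEnd ℂ lam) • 1)) * U⁻¹ := by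
    calc H - (-(starRingEnd ℂ lam)) • 1
        = -(U * (H.map (starRingEnd ℂ)) * U⁻¹) + (starRingEnd ℂ lam) • 1 := by
          rw [hsym, neg_neg, neg_smul, sub_neg_eq_add]
      _ = U * (-(H.map (starRingEnd ℂ) - (starRingEnd ℂ lam) • 1)) * U⁻¹ := by
          rw [neg_sub]
          simp only [Matrix.mul_sub, Matrix.sub_mul, Matrix.mul_smul, Matrix.smul_mul,
            hUU, Matrix.mul_one]
          abel
  rw [hkey, Matrix.det_mul, Matrix.det_mul, Matrix.det_neg, hdet1]
  ring
end
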